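/- arXiv:1604.06886 — 4 statements merged into one kernel-verified Lean document; each statement's English description precedes it below -/
import Mathlib

section
/- Let α > 0 and β ∈ ℝ. Then for every real x, α · E_{α,β}^2(x) = (1 + α − β) · E_{α,β}(x) + E_{α,β−1}(x). -/
open Real Set Filter MeasureTheory
open Topology

/-- The generalized Mittag-Leffler function
`E_{a,b}^r(x)` given by the series sum over k of Gamma(r+k)/(Gamma(r)*Gamma(a*k+b)) * x^k/k!
(real argument). Poles of Gamma are handled by the entire reciprocal Gamma function:
in Mathlib, `Real.Gamma` vanishes at nonpositive integers and division by zero is zero. -/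
noncomputable def mlf (a b r : ℝ) (x : ℝ) : ℝ :=
  ∑' k : ℕ, Real.Gamma (r + k) / (Real.Gamma r * Real.Gamma (a * k + b)) * x ^ k /
    (Nat.factorial k : ℝ)

/-- Reciprocal Gamma recurrence: `1/Γ(z-1) = (z-1)/Γ(z)` everywhere (junk values included). -/
lemma inv_Gamma_sub_one (z : ℝ) : (Real.Gamma (z - 1))⁻¹ = (z - 1) * (Real.Gamma z)⁻¹ := by
  by_cases hz : z - 1 = 0
  · rw [hz, Real.Gamma_zero, inv_zero, zero_mul]
  · have h : Real.Gamma z = (z - 1) * Real.Gamma (z - 1) := by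
      rw [show z = (z - 1) + 1 by ring, Real.Gamma_add_one hz]
      ring_nf
    rw [h, mul_inv, ← mul_assoc, mul_inv_cancel₀ hz, one_mul]

/-- Log-convexity growth bound for `Γ`: for `0 < a < 1` and `z ≥ 2`,
`z * Γ z ≤ Γ (z + a) * (z + a) ^ (1 - a)`. -/
lemma gamma_growth {a z : ℝ} (ha : 0 < a) (ha1 : a < 1) (hz : 2 ≤ z) :
    z * Real.Gamma z ≤ Real.Gamma (z + a) * (z + a) ^ (1 - a) := by
  have hz0 : (0 : ℝ) < z := by linarith
  have hza : (0 : ℝ) < z + a := by linarith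
  have hG : 0 < Real.Gamma (z + a) := Real.Gamma_pos_of_pos hza
  have h1 : Real.Gamma (z + 1) ≤
      Real.Gamma (z + a) ^ a * Real.Gamma (z + a + 1) ^ (1 - a) := by
    have h := Real.Gamma_mul_add_mul_le_rpow_Gamma_mul_rpow_Gamma
      (s := z + a) (t := z + a + 1) (a := a) (b := 1 - a) hza (by linarith) ha
      (by linarith) (by ring)
    have harg : a * (z + a) + (1 - a) * (z + a + 1) = z + 1 := by ring
    rwa [harg] at h
  have h2 : Real.Gamma (z + a + 1) = (z + a) * Real.Gamma (z + a) :=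
    Real.Gamma_add_one (ne_of_gt hza)
  rw [h2, Real.mul_rpow hza.le hG.le] at h1
  have h3 : Real.Gamma (z + a) ^ a * ((z + a) ^ (1 - a) * Real.Gamma (z + a) ^ (1 - a))
      = Real.Gamma (z + a) * (z + a) ^ (1 - a) := by
    rw [mul_comm ((z + a) ^ (1 - a)) (Real.Gamma (z + a) ^ (1 - a)), ← mul_assoc,
      ← Real.rpow_add hG]
    norm_num
  rw [h3] at h1
  calc z * Real.Gamma z = Real.Gamma (z + 1) := (Real.Gamma_add_one (ne_of_gt hz0)).symm
    _ ≤ _ := h1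

/-- Unified growth bound for any `a > 0`, with `a' = min a 1`. -/
lemma gamma_growth' {a z : ℝ} (ha : 0 < a) (hz : 2 ≤ z) :
    z * Real.Gamma z ≤ Real.Gamma (z + a) * (z + min a 1) ^ (1 - min a 1) := by
  rcases lt_or_ge a 1 with h | h
  · rw [min_eq_left h.le]; exact gamma_growth ha h hz
  · rw [min_eq_right h]
    simp only [sub_self, Real.rpow_zero, mul_one]
    have hmono := Real.Gamma_strictMonoOn_Ici.monotoneOn
    have h1 : Real.Gamma (z + 1) ≤ Real.Gamma (z + a) :=
      hmono (by simp [Set.mem_Ici]; linarith) (by simp [Set.mem_Ici]; linarith)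
        (by linarith)
    calc z * Real.Gamma z = Real.Gamma (z + 1) :=
          (Real.Gamma_add_one (by positivity : z ≠ 0)).symm
      _ ≤ _ := h1

/-- Summability of the (simplified) Mittag-Leffler series. -/
lemma mlf_summable (a b : ℝ) (ha : 0 < a) (x : ℝ) :
    Summable (fun k : ℕ => x ^ k / Real.Gamma (a * k + b)) := by
  set a' := min a 1 with ha'def
  have ha' : 0 < a' := lt_min ha one_pos
  -- the sequence a*k+b tends to infinity
  have hg : Tendsto (fun k : ℕ => a * k + b) atTop atTop := by
    apply tendsto_atTop_add_const_right
    exact (tendsto_natCast_atTop_atTop (R := ℝ)).const_mul_atTop ha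
  -- the ratio control function tends to 0
  have h0 : Tendsto (fun z : ℝ => (z + a') ^ (1 - a') / z) atTop (𝓝 0) := by
    have h1 : Tendsto (fun z : ℝ => (z + a') ^ (-a') * ((z + a') / z)) atTop (𝓝 (0 * 1)) := by
      refine Tendsto.mul ?_ ?_
      · exact (tendsto_rpow_neg_atTop ha').comp (tendsto_atTop_add_const_right _ a' tendsto_id)
      · have : Tendsto (fun z : ℝ => 1 + a' / z) atTop (𝓝 (1 + 0)) :=
          tendsto_const_nhds.add (tendsto_const_nhds.div_atTop tendsto_id)
        rw [add_zero] at this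
        refine this.congr' ?_
        filter_upwards [eventually_gt_atTop (0 : ℝ)] with z hz
        field_simp
    rw [zero_mul] at h1
    refine h1.congr' ?_
    filter_upwards [eventually_gt_atTop (0 : ℝ)] with z hz
    have hza : (0 : ℝ) < z + a' := by linarith
    rw [show (1 : ℝ) - a' = -a' + 1 by ring, Real.rpow_add hza, Real.rpow_one]
    rw [mul_div_assoc]
  have htend : Tendsto (fun k : ℕ => (a * k + b + a') ^ (1 - a') / (a * k + b)) atTop (𝓝 0) :=
    h0.comp hg
  -- ratio test
  apply summable_of_ratio_norm_eventually_le (r := 1 / 2) (by norm_num)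
  have hev1 : ∀ᶠ k : ℕ in atTop, 2 ≤ a * k + b := hg.eventually_ge_atTop 2
  have hev2 : ∀ᶠ k : ℕ in atTop,
      (a * k + b + a') ^ (1 - a') / (a * k + b) < 1 / (2 * |x| + 2) := by
    have hpos : (0 : ℝ) < 1 / (2 * |x| + 2) := by positivity
    exact htend.eventually (eventually_lt_nhds hpos)
  filter_upwards [hev1, hev2] with k hk2 hkr
  set z := a * k + b with hzdef
  have hz0 : (0 : ℝ) < z := by linarith
  have hza : (0 : ℝ) < z + a := by linarith
  have hG : 0 < Real.Gamma z := Real.Gamma_pos_of_pos hz0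
  have hGa : 0 < Real.Gamma (z + a) := Real.Gamma_pos_of_pos hza
  have harg : a * (k + 1 : ℕ) + b = z + a := by push_cast; ring
  rw [harg]
  -- reduce to `2 * |x| * Γ z ≤ Γ (z + a)`
  have hkey : 2 * |x| * Real.Gamma z ≤ Real.Gamma (z + a) := by
    have hgrow := gamma_growth' ha hk2
    have hrp : (0 : ℝ) ≤ (z + a') ^ (1 - a') := Real.rpow_nonneg (by linarith) _
    have hx2 : 2 * |x| * (z + a') ^ (1 - a') ≤ z := by
      have h1 : (z + a') ^ (1 - a') < z / (2 * |x| + 2) := by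
        rw [div_lt_div_iff₀ hz0 (by positivity)] at hkr
        rw [lt_div_iff₀ (by positivity)]
        linarith
      have h2 : 2 * |x| * (z + a') ^ (1 - a') ≤ (2 * |x| + 2) * (z + a') ^ (1 - a') := by
        nlinarith [abs_nonneg x]
      have h3 : (2 * |x| + 2) * (z + a') ^ (1 - a') < z := by
        rw [lt_div_iff₀ (by positivity)] at h1
        linarith [h1]
      linarith
    rw [← ha'def] at hgrow
    have hP : 0 < (z + a') ^ (1 - a') := Real.rpow_pos_of_pos (by linarith) _
    have step : 2 * |x| * Real.Gamma z * ((z + a') ^ (1 - a'))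
        ≤ Real.Gamma (z + a) * ((z + a') ^ (1 - a')) := by
      nlinarith [mul_le_mul_of_nonneg_right hx2 hG.le]
    exact le_of_mul_le_mul_right step hP
  rw [Real.norm_eq_abs, Real.norm_eq_abs, abs_div, abs_div, abs_of_pos hG, abs_of_pos hGa,
    abs_pow, abs_pow, pow_succ]
  rw [mul_div_assoc', div_le_div_iff₀ hGa hG]
  calc |x| ^ k * |x| * Real.Gamma z ≤ |x| ^ k * (Real.Gamma (z + a) / 2) := by
        rw [mul_assoc]
        apply mul_le_mul_of_nonneg_left _ (pow_nonneg (abs_nonneg x) k)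
        linarith [hkey]
    _ = 1 / 2 * |x| ^ k * Real.Gamma (z + a) := by ring

/-- for a > 0, b real and all real x,
a * E^2_{a,b}(x) = (1 + a - b) * E_{a,b}(x) + E_{a,b-1}(x). -/
theorem mlf_two_recurrence (a b : ℝ) (ha : 0 < a) (x : ℝ) :
    a * mlf a b 2 x = (1 + a - b) * mlf a b 1 x + mlf a (b - 1) 1 x := by
  have hfac : ∀ k : ℕ, (Nat.factorial k : ℝ) ≠ 0 := fun k => by
    exact_mod_cast Nat.factorial_ne_zero k
  -- simplify the r = 1 series
  have e1 : ∀ b' : ℝ, mlf a b' 1 x = ∑' k : ℕ, x ^ k / Real.Gamma (a * k + b') := by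
    intro b'
    refine tsum_congr fun k => ?_
    rw [show (1 : ℝ) + k = (k : ℝ) + 1 by ring, Real.Gamma_nat_eq_factorial,
      Real.Gamma_one, one_mul, div_mul_eq_mul_div, div_div,
      mul_comm ((Nat.factorial k : ℝ)) (x ^ k), mul_div_mul_right _ _ (hfac k)]
  -- simplify the r = 2 series
  have e2 : mlf a b 2 x = ∑' k : ℕ, ((k : ℝ) + 1) * x ^ k / Real.Gamma (a * k + b) := by
    refine tsum_congr fun k => ?_
    have h2k : (2 : ℝ) + k = ((k + 1 : ℕ) : ℝ) + 1 := by push_cast; ring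
    rw [h2k, Real.Gamma_nat_eq_factorial, Real.Gamma_two, one_mul,
      Nat.factorial_succ]
    push_cast
    rw [div_mul_eq_mul_div, div_div]
    rw [show ((k : ℝ) + 1) * (Nat.factorial k : ℝ) * x ^ k
        = (((k : ℝ) + 1) * x ^ k) * (Nat.factorial k : ℝ) by ring]
    rw [mul_div_mul_right _ _ (hfac k)]
  have hs1 : Summable (fun k : ℕ => x ^ k / Real.Gamma (a * k + b)) := mlf_summable a b ha x
  have hs2 : Summable (fun k : ℕ => x ^ k / Real.Gamma (a * k + (b - 1))) :=
    mlf_summable a (b - 1) ha x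
  rw [e2, e1 b, e1 (b - 1)]
  rw [← tsum_mul_left, ← tsum_mul_left]
  rw [← Summable.tsum_add (hs1.mul_left (1 + a - b)) hs2]
  refine tsum_congr fun k => ?_
  have hinv : (Real.Gamma (a * k + (b - 1)))⁻¹ = (a * k + b - 1) * (Real.Gamma (a * k + b))⁻¹ := by
    rw [show a * k + (b - 1) = (a * k + b) - 1 by ring, inv_Gamma_sub_one]
  simp only [div_eq_mul_inv, hinv]
  ring
end

section
/- Let α > 0 and β ∈ ℝ. Then for every real x, α · x · E_{α,β}^2(x) = (1 + α − β) · E_{α,β−α}(x) + E_{α,β−α−1}(x). -/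
open Real Set Filter MeasureTheory

/-- Reciprocal Gamma recurrence, valid everywhere. -/
lemma one_div_Gamma_sub_one (w : ℝ) : 1 / Real.Gamma (w - 1) = (w - 1) / Real.Gamma w := by
  by_cases h : w - 1 = 0
  · rw [h, Real.Gamma_zero]
    simp
  · have hw : Real.Gamma w = (w - 1) * Real.Gamma (w - 1) := by
      have := Real.Gamma_add_one h
      rwa [sub_add_cancel] at this
    by_cases hg : Real.Gamma (w - 1) = 0
    · rw [hg, hw, hg, mul_zero]
      simp
    · rw [hw]
      field_simp

/-- Summability of the Mittag-Leffler type series. -/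
lemma summable_mlf_aux (a c : ℝ) (ha : 0 < a) (x : ℝ) :
    Summable fun k : ℕ => x ^ k / Real.Gamma (a * k + c) := by
  set r := |x| with hr
  have hr0 : 0 ≤ r := abs_nonneg x
  set T : ℝ := (2 * r + 2) ^ a⁻¹ with hT
  set M : ℕ := ⌈T⌉₊ with hM
  have hTpos : (0:ℝ) < 2 * r + 2 := by linarith
  have hMT : (2 * r + 2) ≤ ((M : ℝ) + 1) ^ a := by
    have h1 : T ≤ (M : ℝ) + 1 := le_trans (Nat.le_ceil T) (by linarith)
    have hT0 : 0 ≤ T := Real.rpow_nonneg (le_of_lt hTpos) _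
    calc (2 * r + 2) = T ^ a := by
          rw [hT, Real.rpow_inv_rpow (le_of_lt hTpos) (ne_of_gt ha)]
      _ ≤ ((M : ℝ) + 1) ^ a := Real.rpow_le_rpow hT0 h1 (le_of_lt ha)
  have hM1 : (1:ℝ) ≤ (M : ℝ) + 1 := by
    have h : (0:ℝ) ≤ (M : ℝ) := Nat.cast_nonneg M
    linarith
  have hM0 : (0:ℝ) < (M : ℝ) + 1 := by linarith
  set D : ℝ := ((M : ℝ) + 1) ^ (c - (M : ℝ) - 2) with hD
  have hDpos : 0 < D := Real.rpow_pos_of_pos hM0 _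
  have hev : ∀ᶠ k : ℕ in atTop, ‖x ^ k / Real.Gamma (a * k + c)‖ ≤
      D⁻¹ * ‖((1:ℝ)/2) ^ k‖ := by
    have htend : Tendsto (fun k : ℕ => a * k + c) atTop atTop := by
      apply Filter.tendsto_atTop_add_const_right
      exact (tendsto_natCast_atTop_atTop).const_mul_atTop ha
    filter_upwards [htend.eventually_ge_atTop ((M : ℝ) + 4)] with k hk
    set z : ℝ := a * k + c with hz
    have hMnn : (0:ℝ) ≤ (M:ℝ) := Nat.cast_nonneg M
    have hz2 : (2:ℝ) ≤ z := by linarith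
    set q : ℕ := ⌊z⌋₊ with hq
    have hqz : (q : ℝ) ≤ z := Nat.floor_le (by linarith)
    have hzq : z < q + 1 := Nat.lt_floor_add_one z
    have hqM : M + 4 ≤ q := by
      apply Nat.le_floor
      push_cast
      linarith
    have hq2 : (2:ℝ) ≤ (q:ℝ) := by
      have : (2:ℕ) ≤ q := by omega
      exact_mod_cast this
    have hmono : Real.Gamma (q : ℝ) ≤ Real.Gamma z :=
      Real.Gamma_strictMonoOn_Ici.monotoneOn hq2 (le_trans hq2 hqz) hqz
    have hqfac : Real.Gamma (q : ℝ) = ((q - 1).factorial : ℝ) := by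
      have h1 : 1 ≤ q := by omega
      have : (q : ℝ) = ((q - 1 : ℕ) : ℝ) + 1 := by
        push_cast [Nat.cast_sub h1]
        ring
      rw [this, Real.Gamma_nat_eq_factorial]
    have hfac : ((M : ℝ) + 1) ^ ((q - 1 - M : ℕ) : ℝ) ≤ ((q - 1).factorial : ℝ) := by
      have h1 : M.factorial * (M + 1) ^ (q - 1 - M) ≤ (M + (q - 1 - M)).factorial :=
        Nat.factorial_mul_pow_le_factorial
      have h2 : M + (q - 1 - M) = q - 1 := by omega
      have h3 : (M + 1) ^ (q - 1 - M) ≤ (q - 1).factorial := by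
        calc (M + 1) ^ (q - 1 - M) ≤ M.factorial * (M + 1) ^ (q - 1 - M) :=
              Nat.le_mul_of_pos_left _ M.factorial_pos
          _ ≤ (M + (q - 1 - M)).factorial := h1
          _ = (q - 1).factorial := by rw [h2]
      calc ((M : ℝ) + 1) ^ ((q - 1 - M : ℕ) : ℝ)
          = (((M + 1) ^ (q - 1 - M) : ℕ) : ℝ) := by
            rw [Real.rpow_natCast]; push_cast; ring
        _ ≤ ((q - 1).factorial : ℝ) := by exact_mod_cast h3
    have hexp : z - (M : ℝ) - 2 ≤ ((q - 1 - M : ℕ) : ℝ) := by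
      have : ((q - 1 - M : ℕ) : ℝ) = (q : ℝ) - 1 - M := by
        rw [Nat.cast_sub (by omega : M ≤ q - 1), Nat.cast_sub (by omega : 1 ≤ q)]
        push_cast
        ring
      rw [this]
      linarith
    have hpow : ((M : ℝ) + 1) ^ (z - (M : ℝ) - 2) ≤ ((M : ℝ) + 1) ^ ((q - 1 - M : ℕ) : ℝ) :=
      Real.rpow_le_rpow_of_exponent_le hM1 hexp
    have hGamma_lb : ((M : ℝ) + 1) ^ (z - (M : ℝ) - 2) ≤ Real.Gamma z :=
      le_trans hpow (le_trans hfac (le_trans (le_of_eq hqfac.symm) hmono))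
    have hsplit : ((M : ℝ) + 1) ^ (z - (M : ℝ) - 2)
        = (((M : ℝ) + 1) ^ a) ^ k * D := by
      have h1 : z - (M : ℝ) - 2 = a * k + (c - (M : ℝ) - 2) := by rw [hz]; ring
      rw [h1, Real.rpow_add hM0, hD]
      congr 1
      rw [Real.rpow_mul (le_of_lt hM0), Real.rpow_natCast]
    have hgeom : (2 * r + 2) ^ k * D ≤ Real.Gamma z := by
      calc (2 * r + 2) ^ k * D ≤ (((M : ℝ) + 1) ^ a) ^ k * D := by
            apply mul_le_mul_of_nonneg_right _ (le_of_lt hDpos)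
            exact pow_le_pow_left₀ (le_of_lt hTpos) hMT k
        _ = ((M : ℝ) + 1) ^ (z - (M : ℝ) - 2) := hsplit.symm
        _ ≤ Real.Gamma z := hGamma_lb
    have hGpos : 0 < Real.Gamma z :=
      lt_of_lt_of_le (by positivity) hgeom
    have hnorm : ‖x ^ k / Real.Gamma z‖ = r ^ k / Real.Gamma z := by
      rw [norm_div, Real.norm_eq_abs, Real.norm_eq_abs, abs_pow, abs_of_pos hGpos, hr]
    rw [hnorm]
    have h2 : ‖((1:ℝ)/2) ^ k‖ = ((1:ℝ)/2) ^ k := by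
      rw [Real.norm_eq_abs, abs_of_nonneg (by positivity)]
    calc r ^ k / Real.Gamma z ≤ r ^ k / ((2 * r + 2) ^ k * D) :=
          div_le_div_of_nonneg_left (by positivity) (by positivity) hgeom
      _ = r ^ k / (2 * r + 2) ^ k / D := by rw [div_div]
      _ = (r / (2 * r + 2)) ^ k / D := by rw [div_pow]
      _ ≤ ((1:ℝ)/2) ^ k / D := by
          rw [div_le_div_iff_of_pos_right hDpos]
          apply pow_le_pow_left₀ (by positivity)
          rw [div_le_div_iff₀ hTpos (by norm_num)]
          linarith
      _ = D⁻¹ * ‖((1:ℝ)/2) ^ k‖ := by rw [h2, div_eq_inv_mul]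
  apply summable_of_isBigO_nat (summable_geometric_of_lt_one (by norm_num) (by norm_num :
    (1:ℝ)/2 < 1))
  exact Asymptotics.isBigO_iff.mpr ⟨D⁻¹, hev⟩

lemma mlf_one_eq (a c : ℝ) (x : ℝ) :
    mlf a c 1 x = ∑' k : ℕ, x ^ k / Real.Gamma (a * k + c) := by
  unfold mlf
  congr 1
  funext k
  have h1 : Real.Gamma (1 + (k : ℝ)) = (k.factorial : ℝ) := by
    rw [add_comm, Real.Gamma_nat_eq_factorial]
  have hk : (k.factorial : ℝ) ≠ 0 := by positivity
  rw [h1, Real.Gamma_one, one_mul, div_eq_iff hk]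
  ring

lemma mlf_two_eq (a c : ℝ) (x : ℝ) :
    mlf a c 2 x = ∑' k : ℕ, ((k : ℝ) + 1) * x ^ k / Real.Gamma (a * k + c) := by
  unfold mlf
  congr 1
  funext k
  have h1 : Real.Gamma (2 + (k : ℝ)) = ((k + 1).factorial : ℝ) := by
    have : (2 : ℝ) + (k : ℝ) = ((k + 1 : ℕ) : ℝ) + 1 := by push_cast; ring
    rw [this, Real.Gamma_nat_eq_factorial]
  have h2 : Real.Gamma 2 = 1 := by
    have : (2 : ℝ) = ((1 : ℕ) : ℝ) + 1 := by norm_num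
    rw [this, Real.Gamma_nat_eq_factorial]; norm_num
  have hk : (k.factorial : ℝ) ≠ 0 := by positivity
  have h3 : ((k + 1).factorial : ℝ) = ((k : ℝ) + 1) * (k.factorial : ℝ) := by
    rw [Nat.factorial_succ]; push_cast; ring
  rw [h1, h2, h3, one_mul, div_eq_iff hk]
  ring

/-- for a > 0, b real and all real x,
a * x * E^2_{a,b}(x) = (1 + a - b) * E_{a,b-a}(x) + E_{a,b-a-1}(x). -/
theorem mlf_two_recurrence' (a b : ℝ) (ha : 0 < a) (x : ℝ) :
    a * x * mlf a b 2 x = (1 + a - b) * mlf a (b - a) 1 x + mlf a (b - a - 1) 1 x := by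
  have hu : Summable fun k : ℕ => x ^ k / Real.Gamma (a * k + (b - a)) :=
    summable_mlf_aux a (b - a) ha x
  have hv : Summable fun k : ℕ => x ^ k / Real.Gamma (a * k + (b - a - 1)) :=
    summable_mlf_aux a (b - a - 1) ha x
  rw [mlf_two_eq, mlf_one_eq, mlf_one_eq]
  -- key pointwise identity
  have hkey : ∀ k : ℕ, a * k * (x ^ k / Real.Gamma (a * k + (b - a)))
      = (1 + a - b) * (x ^ k / Real.Gamma (a * k + (b - a)))
        + x ^ k / Real.Gamma (a * k + (b - a - 1)) := by
    intro k
    have h1 : a * (k : ℝ) + (b - a - 1) = (a * k + (b - a)) - 1 := by ring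
    have h2 : x ^ k / Real.Gamma (a * k + (b - a - 1))
        = ((a * k + (b - a)) - 1) * (x ^ k / Real.Gamma (a * k + (b - a))) := by
      rw [h1]
      have := one_div_Gamma_sub_one (a * k + (b - a))
      rw [div_eq_mul_one_div (x ^ k), this]
      ring
    rw [h2]
    ring
  -- summability of the combined series
  have hg : Summable fun k : ℕ => a * k * (x ^ k / Real.Gamma (a * k + (b - a))) := by
    have := (hu.mul_left (1 + a - b)).add hv
    apply this.congr
    intro k
    exact (hkey k).symm
  -- RHS equals tsum of combined series
  have hrhs : (1 + a - b) * (∑' k : ℕ, x ^ k / Real.Gamma (a * k + (b - a)))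
      + (∑' k : ℕ, x ^ k / Real.Gamma (a * k + (b - a - 1)))
      = ∑' k : ℕ, a * k * (x ^ k / Real.Gamma (a * k + (b - a))) := by
    rw [← tsum_mul_left, ← Summable.tsum_add (hu.mul_left (1 + a - b)) hv]
    exact tsum_congr fun k => (hkey k).symm
  rw [hrhs]
  -- LHS: shift the index
  rw [Summable.tsum_eq_zero_add hg]
  have h0 : a * (0 : ℕ) * (x ^ (0:ℕ) / Real.Gamma (a * (0:ℕ) + (b - a))) = 0 := by
    simp
  rw [h0, zero_add, ← tsum_mul_left]
  apply tsum_congr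
  intro k
  have harg : a * ((k : ℕ) + 1 : ℕ) + (b - a) = a * k + b := by push_cast; ring
  push_cast
  rw [show a * ((k : ℝ) + 1) + (b - a) = a * k + b by ring]
  rw [pow_succ]
  ring
end

section
/- Let α > 0, β > 0 and λ ∈ ℝ, and let s > 0 satisfy |λ| < s^α. Then the Laplace transform ∫_0^∞ e^{−st} · t^{β−1} · E_{α,β}(λ t^α) dt converges and equals s^{α−β} / (s^α − λ). -/
/-!
Since `E_{α,β}(λ t^α) = ∑ λ^k t^{αk} / Γ(αk+β)`, the integrand is a series of the Gamma-type
terms `λ^k e^{-st} t^{αk+β-1} / Γ(αk+β)`, whose Laplace transforms are `λ^k s^{-(αk+β)}`.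
For `|λ| < s^α` the integrals of the absolute values form a convergent geometric series, which
justifies termwise integration, and `∑ λ^k s^{-(αk+β)} = s^{α-β} / (s^α - λ)`.
-/

open Real Set Filter MeasureTheory

theorem MeasureTheory.integrable_tsum_of_summable_integral_norm {α E ι : Type*}
    [MeasurableSpace α] {μ : Measure α} [NormedAddCommGroup E] [CompleteSpace E] [Countable ι]
    {F : ι → α → E} (hF_int : ∀ i, Integrable (F i) μ)
    (hF_sum : Summable fun i ↦ ∫ a, ‖F i a‖ ∂μ) :
    Integrable (fun a ↦ ∑' i, F i a) μ := by
  -- The series of the `L¹` classes converges in `L¹`, hence a.e. pointwise to its `L¹` sum.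
  set g : ι → α →₁[μ] E := fun i ↦ (hF_int i).toL1 (F i)
  have hg_ae : ∀ᵐ a ∂μ, ∀ i, g i a = F i a := ae_all_iff.2 fun i ↦ (hF_int i).coeFn_toL1
  have hg_norm (i : ι) : ‖g i‖ = ∫ a, ‖F i a‖ ∂μ := by
    rw [L1.norm_eq_integral_norm]
    exact integral_congr_ae <| hg_ae.mono fun a ha ↦ congrArg norm (ha i)
  have hg_sum : ∑' i, ‖g i‖ₑ ≠ ⊤ :=
    tsum_enorm_ne_top_iff_summable_norm.2 <| by simpa only [hg_norm] using hF_sum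
  refine (L1.integrable_coeFn (∑' i, g i)).congr ?_
  filter_upwards [Lp.coeFn_tsum hg_sum, hg_ae] with a hsum hg
  simp only [hsum, hg]

theorem mlf_one_eq_tsum (a b x : ℝ) : mlf a b 1 x = ∑' k : ℕ, x ^ k / Gamma (a * k + b) := by
  refine tsum_congr fun k ↦ ?_
  rw [Gamma_one, one_mul, add_comm, Gamma_nat_eq_factorial]
  field_simp

theorem rpow_sub_one_mul_mlf_one {t : ℝ} (ht : 0 < t) (a b lam : ℝ) :
    t ^ (b - 1) * mlf a b 1 (lam * t ^ a) =
      ∑' k : ℕ, lam ^ k / Gamma (a * k + b) * t ^ (a * k + b - 1) := by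
  rw [mlf_one_eq_tsum, ← tsum_mul_left]
  refine tsum_congr fun k ↦ ?_
  have hpow : t ^ (a * k + b - 1) = t ^ (b - 1) * (t ^ a) ^ k := by
    rw [← rpow_natCast, ← rpow_mul ht.le, ← rpow_add ht]
    ring_nf
  rw [hpow, mul_pow]
  ring

theorem hasSum_pow_mul_one_div_rpow {a s lam : ℝ} (hs : 0 < s) (hlam : |lam| < s ^ a) (b : ℝ) :
    HasSum (fun k : ℕ ↦ lam ^ k * (1 / s) ^ (a * k + b)) (s ^ (a - b) / (s ^ a - lam)) := by
  have hsa : 0 < s ^ a := rpow_pos_of_pos hs a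
  have hratio : |lam / s ^ a| < 1 := by
    rwa [abs_div, abs_of_pos hsa, div_lt_one hsa]
  have hterm (k : ℕ) : lam ^ k * (1 / s) ^ (a * k + b) = (1 / s) ^ b * (lam / s ^ a) ^ k := by
    rw [rpow_add (by positivity), rpow_mul (by positivity), rpow_natCast, one_div,
      inv_rpow hs.le, div_pow, inv_pow]
    ring
  have hval : (1 / s) ^ b * (1 - lam / s ^ a)⁻¹ = s ^ (a - b) / (s ^ a - lam) := by
    rw [rpow_sub hs, one_div, inv_rpow hs.le]
    field_simp
  simpa only [hterm, hval] using (hasSum_geometric_of_abs_lt_one hratio).mul_left ((1 / s) ^ b)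

theorem integrableOn_exp_neg_mul_mul_rpow {s p : ℝ} (hs : 0 < s) (hp : 0 < p) (c : ℝ) :
    IntegrableOn (fun t ↦ exp (-(s * t)) * (c * t ^ (p - 1))) (Ioi 0) := by
  have : IntegrableOn (fun t : ℝ ↦ c * (t ^ (p - 1) * exp (-s * t ^ (1 : ℝ)))) (Ioi 0) :=
    (integrableOn_rpow_mul_exp_neg_mul_rpow (by linarith) one_pos hs).const_mul c
  refine this.congr_fun (fun t _ ↦ ?_) measurableSet_Ioi
  simp only [rpow_one, neg_mul]
  ring

theorem integral_exp_neg_mul_mul_rpow {s p : ℝ} (hs : 0 < s) (hp : 0 < p) (c : ℝ) :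
    ∫ t in Ioi 0, exp (-(s * t)) * (c * t ^ (p - 1)) = c * Gamma p * (1 / s) ^ p := by
  simp_rw [mul_left_comm (exp _), integral_const_mul, mul_comm (exp _),
    integral_rpow_mul_exp_neg_mul_Ioi hp hs]
  ring

theorem integral_norm_exp_neg_mul_mul_rpow {s p : ℝ} (hs : 0 < s) (hp : 0 < p) (c : ℝ) :
    ∫ t in Ioi 0, ‖exp (-(s * t)) * (c * t ^ (p - 1))‖ = |c| * Gamma p * (1 / s) ^ p := by
  rw [← integral_exp_neg_mul_mul_rpow hs hp]
  refine setIntegral_congr_fun measurableSet_Ioi fun t (ht : 0 < t) ↦ ?_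
  rw [norm_mul, norm_mul, norm_of_nonneg (exp_pos _).le, norm_of_nonneg (rpow_pos_of_pos ht _).le,
    norm_eq_abs]

section LaplaceSeries

variable {s : ℝ} {c p : ℕ → ℝ}

theorem integrableOn_exp_neg_mul_mul_tsum_rpow (hs : 0 < s) (hp : ∀ k, 0 < p k)
    (hsum : Summable fun k ↦ |c k| * Gamma (p k) * (1 / s) ^ p k) :
    IntegrableOn (fun t ↦ exp (-(s * t)) * ∑' k, c k * t ^ (p k - 1)) (Ioi 0) := by
  simp_rw [← tsum_mul_left]
  exact integrable_tsum_of_summable_integral_norm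
    (fun k ↦ integrableOn_exp_neg_mul_mul_rpow hs (hp k) (c k))
    (by simpa only [integral_norm_exp_neg_mul_mul_rpow hs (hp _)] using hsum)

theorem hasSum_integral_exp_neg_mul_mul_tsum_rpow (hs : 0 < s) (hp : ∀ k, 0 < p k)
    (hsum : Summable fun k ↦ |c k| * Gamma (p k) * (1 / s) ^ p k) :
    HasSum (fun k ↦ c k * Gamma (p k) * (1 / s) ^ p k)
      (∫ t in Ioi 0, exp (-(s * t)) * ∑' k, c k * t ^ (p k - 1)) := by
  simp_rw [← tsum_mul_left, ← integral_exp_neg_mul_mul_rpow hs (hp _)]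
  exact hasSum_integral_of_summable_integral_norm
    (fun k ↦ integrableOn_exp_neg_mul_mul_rpow hs (hp k) (c k))
    (by simpa only [integral_norm_exp_neg_mul_mul_rpow hs (hp _)] using hsum)

end LaplaceSeries

/-- for a > 0, b > 0, lam real and s > 0 with |lam| < s^a, the Laplace
transform of t^(b-1) * E_{a,b}(lam*t^a) converges and equals s^(a-b) / (s^a - lam). -/
theorem laplace_mlf (a b lam s : ℝ) (ha : 0 < a) (hb : 0 < b) (hs : 0 < s)
    (hlam : |lam| < s ^ a) :
    IntegrableOn (fun t : ℝ => Real.exp (-(s * t)) * t ^ (b - 1) * mlf a b 1 (lam * t ^ a))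
      (Ioi 0) ∧
    ∫ t in Ioi (0 : ℝ), Real.exp (-(s * t)) * t ^ (b - 1) * mlf a b 1 (lam * t ^ a) =
      s ^ (a - b) / (s ^ a - lam) := by
  have hp (k : ℕ) : 0 < a * k + b := by positivity
  have hcoeff (x : ℝ) (k : ℕ) :
      x ^ k / Gamma (a * k + b) * Gamma (a * k + b) * (1 / s) ^ (a * k + b) =
        x ^ k * (1 / s) ^ (a * k + b) := by
    rw [div_mul_cancel₀ _ (Gamma_pos_of_pos (hp k)).ne']
  have hsum : Summable fun k : ℕ ↦
      |lam ^ k / Gamma (a * k + b)| * Gamma (a * k + b) * (1 / s) ^ (a * k + b) := by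
    simp_rw [abs_div, abs_pow, abs_of_pos (Gamma_pos_of_pos (hp _)), hcoeff]
    exact (hasSum_pow_mul_one_div_rpow hs (by rwa [abs_abs]) b).summable
  have hintegrand : EqOn (fun t ↦ exp (-(s * t)) * t ^ (b - 1) * mlf a b 1 (lam * t ^ a))
      (fun t ↦ exp (-(s * t)) * ∑' k : ℕ, lam ^ k / Gamma (a * k + b) * t ^ (a * k + b - 1))
      (Ioi 0) := fun t ht ↦
    (mul_assoc _ _ _).trans (congrArg _ (rpow_sub_one_mul_mlf_one ht a b lam))
  refine ⟨(integrableOn_exp_neg_mul_mul_tsum_rpow hs hp hsum).congr_fun hintegrand.symm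
    measurableSet_Ioi, ?_⟩
  rw [setIntegral_congr_fun measurableSet_Ioi hintegrand]
  refine (hasSum_integral_exp_neg_mul_mul_tsum_rpow hs hp hsum).unique ?_
  simpa only [hcoeff] using hasSum_pow_mul_one_div_rpow hs hlam b
end

section
/- Let z : [0,1] → ℝ be four times continuously differentiable with z'(0) = z'(1), and let λ_n = 2πn with n a positive integer. Then ∫_0^1 z(x) cos(λ_n x) dx = (1/λ_n⁴) · [ z'''(0) − z'''(1) + ∫_0^1 z⁗(x) cos(λ_n x) dx ]. -/
open Real Set intervalIntegral

/-!
Integrate by parts four times against `cos (λ x)`, `sin (λ x)`, `cos (λ x)`, `sin (λ x)`, where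
`λ = 2πn`. Since `sin` vanishes and `cos` equals `1` at `λ · 0` and `λ · 1`, the two `cos`-steps
produce no boundary terms, while the two `sin`-steps produce `z' 0 - z' 1 = 0` and `z''' 0 - z''' 1`.
-/

section IntegrationByParts

variable {u u' : ℝ → ℝ} {a b L : ℝ}

theorem integral_mul_cos_mul_eq (hL : L ≠ 0)
    (hu : ∀ x ∈ uIcc a b, HasDerivWithinAt u (u' x) (uIcc a b) x)
    (hu' : IntervalIntegrable u' MeasureTheory.volume a b) :
    ∫ x in a..b, u x * cos (L * x) =
      (u b * sin (L * b) - u a * sin (L * a) - ∫ x in a..b, u' x * sin (L * x)) / L := by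
  have hv : ∀ x, HasDerivAt (fun y => sin (L * y) / L) (cos (L * x)) x := fun x => by
    refine (((hasDerivAt_id' x).const_mul L).sin.div_const L).congr_deriv ?_
    field_simp
  rw [integral_mul_deriv_eq_deriv_mul_of_hasDerivWithinAt hu (fun x _ => (hv x).hasDerivWithinAt)
    hu' ((by fun_prop : Continuous fun x => cos (L * x)).intervalIntegrable a b)]
  simp only [← mul_div_assoc, intervalIntegral.integral_div]
  ring

theorem integral_mul_sin_mul_eq (hL : L ≠ 0)
    (hu : ∀ x ∈ uIcc a b, HasDerivWithinAt u (u' x) (uIcc a b) x)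
    (hu' : IntervalIntegrable u' MeasureTheory.volume a b) :
    ∫ x in a..b, u x * sin (L * x) =
      (u a * cos (L * a) - u b * cos (L * b) + ∫ x in a..b, u' x * cos (L * x)) / L := by
  have hv : ∀ x, HasDerivAt (fun y => -cos (L * y) / L) (sin (L * x)) x := fun x => by
    refine (((hasDerivAt_id' x).const_mul L).cos.neg.div_const L).congr_deriv ?_
    field_simp
  rw [integral_mul_deriv_eq_deriv_mul_of_hasDerivWithinAt hu (fun x _ => (hv x).hasDerivWithinAt)
    hu' ((by fun_prop : Continuous fun x => sin (L * x)).intervalIntegrable a b)]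
  simp only [mul_div_assoc', mul_neg, neg_div, intervalIntegral.integral_neg,
    intervalIntegral.integral_div]
  ring

end IntegrationByParts

section UnitInterval

variable {u u' : ℝ → ℝ} {n : ℕ}

theorem integral_mul_cos_two_pi_nat_mul (hn : n ≠ 0)
    (hu : ∀ x ∈ Icc (0 : ℝ) 1, HasDerivWithinAt u (u' x) (Icc 0 1) x)
    (hu' : IntervalIntegrable u' MeasureTheory.volume 0 1) :
    ∫ x in (0 : ℝ)..1, u x * cos (2 * π * n * x) =
      -(∫ x in (0 : ℝ)..1, u' x * sin (2 * π * n * x)) / (2 * π * n) := by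
  have hsin : sin (2 * π * n) = 0 := by
    rw [show 2 * π * n = (2 * n : ℕ) * π by push_cast; ring, sin_nat_mul_pi]
  rw [← uIcc_of_le zero_le_one] at hu
  rw [integral_mul_cos_mul_eq (by positivity) hu hu']
  simp only [mul_one, hsin, mul_zero, sin_zero]
  ring

theorem integral_mul_sin_two_pi_nat_mul (hn : n ≠ 0)
    (hu : ∀ x ∈ Icc (0 : ℝ) 1, HasDerivWithinAt u (u' x) (Icc 0 1) x)
    (hu' : IntervalIntegrable u' MeasureTheory.volume 0 1) :
    ∫ x in (0 : ℝ)..1, u x * sin (2 * π * n * x) =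
      (u 0 - u 1 + ∫ x in (0 : ℝ)..1, u' x * cos (2 * π * n * x)) / (2 * π * n) := by
  have hcos : cos (2 * π * n) = 1 := by
    rw [show 2 * π * n = n * (2 * π) by ring, cos_nat_mul_two_pi]
  rw [← uIcc_of_le zero_le_one] at hu
  rw [integral_mul_sin_mul_eq (by positivity) hu hu']
  simp only [mul_one, hcos, mul_zero, cos_zero]

end UnitInterval

/-- if z is four times continuously differentiable on [0,1]
(with successive derivatives z1, z2, z3, z4) and z1 0 = z1 1, and lam_n = 2*pi*n
with n a positive integer, then the integral over [0,1] of z x * cos (lam_n * x)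
equals (1/lam_n^4) * (z3 0 - z3 1 + integral of z4 x * cos (lam_n * x)). -/
theorem fourier_cos_coeff_decay (z z1 z2 z3 z4 : ℝ → ℝ)
    (h1 : ∀ x ∈ Icc (0 : ℝ) 1, HasDerivWithinAt z (z1 x) (Icc 0 1) x)
    (h2 : ∀ x ∈ Icc (0 : ℝ) 1, HasDerivWithinAt z1 (z2 x) (Icc 0 1) x)
    (h3 : ∀ x ∈ Icc (0 : ℝ) 1, HasDerivWithinAt z2 (z3 x) (Icc 0 1) x)
    (h4 : ∀ x ∈ Icc (0 : ℝ) 1, HasDerivWithinAt z3 (z4 x) (Icc 0 1) x)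
    (hc : ContinuousOn z4 (Icc 0 1))
    (hbc : z1 0 = z1 1) (n : ℕ) (hn : 0 < n) :
    ∫ x in (0 : ℝ)..1, z x * Real.cos (2 * π * n * x) =
      (1 / (2 * π * n) ^ 4) *
        (z3 0 - z3 1 + ∫ x in (0 : ℝ)..1, z4 x * Real.cos (2 * π * n * x)) := by
  have integrable {f f' : ℝ → ℝ}
      (hf : ∀ x ∈ Icc (0 : ℝ) 1, HasDerivWithinAt f (f' x) (Icc 0 1) x) :
      IntervalIntegrable f MeasureTheory.volume 0 1 :=
    ContinuousOn.intervalIntegrable_of_Icc zero_le_one fun x hx => (hf x hx).continuousWithinAt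
  rw [integral_mul_cos_two_pi_nat_mul hn.ne' h1 (integrable h2),
    integral_mul_sin_two_pi_nat_mul hn.ne' h2 (integrable h3),
    integral_mul_cos_two_pi_nat_mul hn.ne' h3 (integrable h4),
    integral_mul_sin_two_pi_nat_mul hn.ne' h4 (hc.intervalIntegrable_of_Icc zero_le_one),
    hbc, sub_self]
  field_simp
  ring
end
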